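/- arXiv:1809.07155 — 6 statements merged into one kernel-verified Lean document; each statement's English description precedes it below -/
import Mathlib

section
/- Let g : (0,∞) → ℝ be measurable such that t ↦ w(t)|g(t)|^{p−2}g(t) is locally integrable on (0,∞). Then ∫₀^∞ w(t)|g(t)|^{p−2}g(t)·φ'(t) dt = 0 for every smooth function φ : ℝ → ℝ with compact support contained in (0,∞) if and only if there exists a constant a ∈ ℝ such that g(t) = a·w(t)^{1/(1-p)} for a.e. t ∈ (0,∞). (This characterizes the weak solutions of the one-dimensional p-Laplace equation (w|u'|^{p−2}u')' = 0: the p-harmonic functions on the weighted half-line are exactly x ↦ b + a∫₀ˣ w(t)^{1/(1-p)} dt.) -/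
/-!
Write `F = w |g|^(p-2) g`. The weak equation says that `F` annihilates the derivatives of all
test functions on `(0, ∞)`. On an interval these derivatives are exactly the test functions of
mean zero, since such a function has a compactly supported primitive; so `F` is a.e. constant
(du Bois-Reymond). Since `s ↦ |s|^(p-2) s` is a bijection of `ℝ` and `w > 0`, the equation
`w |g|^(p-2) g = c` forces `g = a w^(1/(1-p))` with `|a|^(p-2) a = c`.
-/

open MeasureTheory Set Function

open scoped ContDiff

namespace Real

/-- `signedRpow x q = sign x * |x| ^ q`; the `p`-Laplacian nonlinearity `|s|^(p-2) s` is
`signedRpow s (p - 1)`. -/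
noncomputable def signedRpow (x q : ℝ) : ℝ := |x| ^ (q - 1) * x

@[simp]
lemma signedRpow_zero (q : ℝ) : signedRpow 0 q = 0 := by simp [signedRpow]

@[simp]
lemma signedRpow_one (x : ℝ) : signedRpow x 1 = x := by simp [signedRpow]

lemma abs_signedRpow {x : ℝ} (hx : x ≠ 0) (q : ℝ) : |signedRpow x q| = |x| ^ q := by
  rw [signedRpow, abs_mul, abs_of_nonneg (rpow_nonneg (abs_nonneg x) _),
    ← rpow_add_one (abs_ne_zero.2 hx), sub_add_cancel]

lemma signedRpow_signedRpow (x q r : ℝ) :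
    signedRpow (signedRpow x q) r = signedRpow x (q * r) := by
  rcases eq_or_ne x 0 with rfl | hx
  · simp
  rw [signedRpow, abs_signedRpow hx, ← rpow_mul (abs_nonneg x), signedRpow, signedRpow,
    ← mul_assoc, ← rpow_add (abs_pos.2 hx)]
  ring_nf

lemma signedRpow_mul_of_pos (x : ℝ) {y : ℝ} (hy : 0 < y) (q : ℝ) :
    signedRpow (x * y) q = signedRpow x q * y ^ q := by
  rw [signedRpow, signedRpow, abs_mul, abs_of_pos hy, mul_rpow (abs_nonneg x) hy.le,
    rpow_sub_one hy.ne']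
  field_simp

lemma signedRpow_injective {q : ℝ} (hq : q ≠ 0) : Injective (signedRpow · q) :=
  LeftInverse.injective (g := (signedRpow · q⁻¹)) fun x => by
    simp [signedRpow_signedRpow, mul_inv_cancel₀ hq]

lemma signedRpow_surjective {q : ℝ} (hq : q ≠ 0) : Surjective (signedRpow · q) :=
  RightInverse.surjective (g := (signedRpow · q⁻¹)) fun x => by
    simp [signedRpow_signedRpow, inv_mul_cancel₀ hq]

lemma mul_signedRpow_eq_signedRpow_iff {w q : ℝ} (hw : 0 < w) (hq : q ≠ 0) (s a : ℝ) :
    w * signedRpow s q = signedRpow a q ↔ s = a * w ^ (-q⁻¹) := by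
  have key : w * signedRpow (a * w ^ (-q⁻¹)) q = signedRpow a q := by
    rw [signedRpow_mul_of_pos a (rpow_pos_of_pos hw _), ← rpow_mul hw.le, neg_mul,
      inv_mul_cancel₀ hq, rpow_neg_one]
    field_simp
  refine ⟨fun h => signedRpow_injective hq (mul_left_cancel₀ hw.ne' ?_), fun h => h ▸ key⟩
  simp only [h, key]

end Real

theorem IsOpen.exists_contDiff_integral_eq_one {E : Type*} [NormedAddCommGroup E]
    [NormedSpace ℝ E] [FiniteDimensional ℝ E] [MeasurableSpace E] [BorelSpace E]
    {μ : Measure E} [μ.IsOpenPosMeasure] [IsFiniteMeasureOnCompacts μ] {U : Set E}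
    (hU : IsOpen U) (hne : U.Nonempty) :
    ∃ ρ : E → ℝ, ContDiff ℝ ∞ ρ ∧ HasCompactSupport ρ ∧ tsupport ρ ⊆ U ∧
      ∫ x, ρ x ∂μ = 1 := by
  obtain ⟨x, hx⟩ := hne
  obtain ⟨ε, hε, hball⟩ := Metric.isOpen_iff.1 hU x hx
  let b : ContDiffBump x := ⟨ε / 4, ε / 2, by positivity, by linarith⟩
  refine ⟨b.normed μ, b.contDiff_normed, b.hasCompactSupport_normed, ?_, b.integral_normed⟩
  rw [b.tsupport_normed_eq]
  exact (Metric.closedBall_subset_ball (show ε / 2 < ε by linarith)).trans hball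

theorem MeasureTheory.LocallyIntegrableOn.integrable_mul_of_tsupport_subset {X : Type*}
    [TopologicalSpace X] [T2Space X] [MeasurableSpace X] [OpensMeasurableSpace X]
    {μ : Measure X} {U : Set X}
    {F ψ : X → ℝ} (hF : LocallyIntegrableOn F U μ) (hψ : Continuous ψ)
    (hψc : HasCompactSupport ψ) (hψU : tsupport ψ ⊆ U) :
    Integrable (fun x => F x * ψ x) μ := by
  have hsupp : support (fun x => F x * ψ x) ⊆ tsupport ψ :=
    (support_mul_subset_right F ψ).trans (subset_tsupport ψ)
  refine (integrableOn_iff_integrable_of_support_subset hsupp).1 ?_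
  exact (hF.integrableOn_compact_subset hψU hψc).mul_continuousOn hψ.continuousOn hψc

theorem setIntegral_mul_eq_integral_of_tsupport_subset {X : Type*} [MeasurableSpace X]
    [TopologicalSpace X] {μ : Measure X} {U : Set X} (F : X → ℝ) {ψ : X → ℝ}
    (hψU : tsupport ψ ⊆ U) :
    ∫ x in U, F x * ψ x ∂μ = ∫ x, F x * ψ x ∂μ :=
  setIntegral_eq_integral_of_forall_compl_eq_zero fun x hx => by
    rw [image_eq_zero_of_notMem_tsupport fun h => hx (hψU h), mul_zero]

/-- For `ρ` a test function of integral one, `ψ - (∫ ψ) • ρ` has mean zero, so `F - ∫ F ρ`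
annihilates every test function `ψ`. -/
theorem IsOpen.ae_eq_const_of_integral_mul_eq_zero {E : Type*} [NormedAddCommGroup E]
    [NormedSpace ℝ E] [FiniteDimensional ℝ E] [MeasurableSpace E] [BorelSpace E]
    {μ : Measure E} [μ.IsOpenPosMeasure] [IsFiniteMeasureOnCompacts μ] {U : Set E}
    (hU : IsOpen U) {F : E → ℝ} (hF : LocallyIntegrableOn F U μ)
    (h : ∀ χ : E → ℝ, ContDiff ℝ ∞ χ → HasCompactSupport χ → tsupport χ ⊆ U →
      ∫ x, χ x ∂μ = 0 → ∫ x, F x * χ x ∂μ = 0) :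
    ∃ c, ∀ᵐ x ∂μ.restrict U, F x = c := by
  rcases U.eq_empty_or_nonempty with rfl | hne
  · exact ⟨0, by simp⟩
  obtain ⟨ρ, hρ, hρc, hρU, hρ1⟩ := hU.exists_contDiff_integral_eq_one (μ := μ) hne
  have hFρ := hF.integrable_mul_of_tsupport_subset hρ.continuous hρc hρU
  refine ⟨∫ x, F x * ρ x ∂μ, ?_⟩
  have hsub : ∀ᵐ x ∂μ, x ∈ U → F x - ∫ x, F x * ρ x ∂μ = 0 := by
    refine hU.ae_eq_zero_of_integral_contDiff_smul_eq_zero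
      (hF.sub (locallyIntegrableOn_const _)) fun ψ hψ hψc hψU => ?_
    have hψi : Integrable ψ μ := hψ.continuous.integrable_of_hasCompactSupport hψc
    have hFψ := hF.integrable_mul_of_tsupport_subset hψ.continuous hψc hψU
    have hχU : tsupport (fun x => ψ x - (∫ x, ψ x ∂μ) * ρ x) ⊆ U := by
      refine (closure_mono (support_sub _ _)).trans ?_
      rw [closure_union]
      exact union_subset hψU (tsupport_mul_subset_right.trans hρU)
    have hχ0 : ∫ x, ψ x - (∫ x, ψ x ∂μ) * ρ x ∂μ = 0 := by
      rw [integral_sub hψi (hρ.continuous.integrable_of_hasCompactSupport hρc |>.const_mul _),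
        integral_const_mul, hρ1, mul_one, sub_self]
    have hmean := h _ (hψ.sub (contDiff_const.mul hρ)) (hψc.sub hρc.mul_left) hχU hχ0
    calc _ = ∫ x, F x * ψ x - (∫ x, F x * ρ x ∂μ) * ψ x ∂μ := by
          congr 1; ext x; simp only [smul_eq_mul]; ring
      _ = ∫ x, F x * ψ x - (∫ x, ψ x ∂μ) * (F x * ρ x) ∂μ := by
          rw [integral_sub hFψ (hψi.const_mul _), integral_sub hFψ (hFρ.const_mul _),
            integral_const_mul, integral_const_mul, mul_comm]
      _ = ∫ x, F x * (ψ x - (∫ x, ψ x ∂μ) * ρ x) ∂μ := by congr 1; ext x; ring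
      _ = 0 := hmean
  filter_upwards [(ae_restrict_iff' hU.measurableSet).2 hsub] with x hx
  exact sub_eq_zero.1 hx

theorem IsCompact.exists_Icc_subset_of_subset {K U : Set ℝ} (hK : IsCompact K)
    [hU : U.OrdConnected] (hKU : K ⊆ U) : ∃ α β, K ⊆ Icc α β ∧ Icc α β ⊆ U := by
  rcases K.eq_empty_or_nonempty with rfl | hne
  · exact ⟨1, 0, empty_subset _, by simp⟩
  exact ⟨sInf K, sSup K, fun x hx => ⟨csInf_le hK.bddBelow hx, le_csSup hK.bddAbove hx⟩,
    hU.out (hKU (hK.sInf_mem hne)) (hKU (hK.sSup_mem hne))⟩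

/-- The primitive is taken from a point `α - 1` left of the support so that it vanishes on
`Iio α`; it vanishes beyond `β` because `χ` has mean zero. -/
theorem exists_contDiff_deriv_eq_of_integral_eq_zero {χ : ℝ → ℝ} {α β : ℝ}
    (hχ : ContDiff ℝ ∞ χ) (hχs : support χ ⊆ Icc α β) (hχ0 : ∫ x, χ x = 0) :
    ∃ Φ : ℝ → ℝ, ContDiff ℝ ∞ Φ ∧ deriv Φ = χ ∧ support Φ ⊆ Icc α β := by
  set Φ : ℝ → ℝ := fun x => ∫ t in (α - 1)..x, χ t with hΦ
  have hderiv : ∀ x, HasDerivAt Φ (χ x) x := fun x =>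
    hχ.continuous.integral_hasStrictDerivAt (α - 1) x |>.hasDerivAt
  have hderiv_eq : deriv Φ = χ := funext fun x => (hderiv x).deriv
  have hχ_out : ∀ t ∉ Icc α β, χ t = 0 := fun t ht => notMem_support.1 fun h => ht (hχs h)
  have hleft : ∀ x < α, Φ x = 0 := fun x hxα => by
    have hzero : EqOn χ 0 (uIcc (α - 1) x) := fun t ht => hχ_out t fun htαβ =>
      (max_lt (sub_one_lt α) hxα).not_ge (htαβ.1.trans ht.2)
    simp only [hΦ, intervalIntegral.integral_congr hzero, Pi.zero_apply,
      intervalIntegral.integral_zero]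
  have hright : ∀ x, α ≤ x → β < x → Φ x = 0 := fun x hαx hβx => by
    show ∫ t in (α - 1)..x, χ t = 0
    rw [intervalIntegral.integral_of_le (by linarith),
      setIntegral_eq_integral_of_forall_compl_eq_zero fun t (ht : t ∉ Ioc (α - 1) x) =>
        hχ_out t fun htαβ => ht ⟨by linarith [htαβ.1], htαβ.2.trans hβx.le⟩, hχ0]
  refine ⟨Φ, contDiff_infty_iff_deriv.2 ⟨fun x => (hderiv x).differentiableAt,
    by rwa [hderiv_eq]⟩, hderiv_eq, fun x hx => ?_⟩
  exact ⟨not_lt.1 fun hxα => hx (hleft x hxα),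
    not_lt.1 fun hβx => hx ((lt_or_ge x α).elim (hleft x) (hright x · hβx))⟩

theorem IsOpen.integral_mul_deriv_eq_zero_iff_ae_eq_const {U : Set ℝ} (hU : IsOpen U)
    [U.OrdConnected] {F : ℝ → ℝ} (hF : LocallyIntegrableOn F U) :
    (∀ φ : ℝ → ℝ, ContDiff ℝ (⊤ : ℕ∞) φ → HasCompactSupport φ → tsupport φ ⊆ U →
        ∫ t in U, F t * deriv φ t = 0) ↔ ∃ c, ∀ᵐ t ∂volume.restrict U, F t = c := by
  constructor
  · intro h
    refine hU.ae_eq_const_of_integral_mul_eq_zero hF fun χ hχ hχc hχU hχ0 => ?_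
    obtain ⟨α, β, hχαβ, hαβU⟩ := hχc.isCompact.exists_Icc_subset_of_subset hχU
    obtain ⟨Φ, hΦ, hΦχ, hΦs⟩ :=
      exists_contDiff_deriv_eq_of_integral_eq_zero hχ ((subset_tsupport χ).trans hχαβ) hχ0
    have hΦ0 := h Φ hΦ (HasCompactSupport.of_support_subset_isCompact isCompact_Icc hΦs)
      ((closure_minimal hΦs isClosed_Icc).trans hαβU)
    rwa [hΦχ, setIntegral_mul_eq_integral_of_tsupport_subset F hχU] at hΦ0
  · rintro ⟨c, hc⟩ φ hφ hφc hφU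
    have hφ'U : tsupport (deriv φ) ⊆ U := tsupport_deriv_subset.trans hφU
    calc ∫ t in U, F t * deriv φ t = ∫ t in U, c * deriv φ t :=
          integral_congr_ae (hc.mono fun t ht => congrArg (· * deriv φ t) ht)
      _ = c * ∫ t, deriv φ t := by
          rw [setIntegral_mul_eq_integral_of_tsupport_subset _ hφ'U, integral_const_mul]
      _ = 0 := by
          rw [integral_eq_zero_of_hasDerivAt_of_integrable
            (fun x => (hφ.differentiable (by simp) x).hasDerivAt)
            ((hφ.continuous_deriv (by simp)).integrable_of_hasCompactSupport hφc.deriv)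
            (hφ.continuous.integrable_of_hasCompactSupport hφc), mul_zero]

theorem stmt_1_general (p : ℝ) (hp : 1 < p) (w : ℝ → ℝ)
    (hw_pos : ∀ᵐ t ∂(volume : Measure ℝ), 0 < w t)
    (g : ℝ → ℝ)
    (hg_loc : LocallyIntegrableOn (fun t => w t * |g t| ^ (p - 2) * g t)
      (Ioi (0 : ℝ))) :
    (∀ φ : ℝ → ℝ, ContDiff ℝ (⊤ : ℕ∞) φ → HasCompactSupport φ →
        tsupport φ ⊆ Ioi (0 : ℝ) →
        (∫ t in Ioi (0 : ℝ), w t * |g t| ^ (p - 2) * g t * deriv φ t) = 0)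
      ↔ (∃ a : ℝ, ∀ᵐ t ∂(volume.restrict (Ioi (0 : ℝ))),
          g t = a * w t ^ (1 / (1 - p))) := by
  have hq : p - 1 ≠ 0 := sub_ne_zero.2 hp.ne'
  have hexp : 1 / (1 - p) = -(p - 1)⁻¹ := by rw [one_div, ← inv_neg, neg_sub]
  have hF : ∀ t, w t * |g t| ^ (p - 2) * g t = w t * Real.signedRpow (g t) (p - 1) := fun t => by
    rw [Real.signedRpow, show p - 1 - 1 = p - 2 by ring, mul_assoc]
  refine (isOpen_Ioi.integral_mul_deriv_eq_zero_iff_ae_eq_const hg_loc).trans ⟨?_, ?_⟩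
  · rintro ⟨c, hc⟩
    obtain ⟨a, rfl⟩ := Real.signedRpow_surjective hq c
    refine ⟨a, ?_⟩
    filter_upwards [hc, ae_restrict_of_ae hw_pos] with t hct hwt
    rw [hexp, ← Real.mul_signedRpow_eq_signedRpow_iff hwt hq, ← hF]
    exact hct
  · rintro ⟨a, ha⟩
    refine ⟨Real.signedRpow a (p - 1), ?_⟩
    filter_upwards [ha, ae_restrict_of_ae hw_pos] with t hgt hwt
    rw [hF, Real.mul_signedRpow_eq_signedRpow_iff hwt hq, ← hexp]
    exact hgt

/-- Weak solutions of the one-dimensional weighted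
`p`-Laplace equation `(w |u'|^{p-2} u')' = 0` on `(0,∞)`: a function `g`
(playing the role of `u'`) satisfies the weak equation
`∫₀^∞ w |g|^{p-2} g · φ' dt = 0` for all smooth compactly supported test
functions `φ` with support in `(0,∞)` if and only if
`g = a · w^{1/(1-p)}` a.e. on `(0,∞)` for some constant `a`. -/
theorem stmt_1 (p : ℝ) (hp : 1 < p) (w : ℝ → ℝ)
    (hw_meas : Measurable w)
    (hw_pos : ∀ᵐ t ∂(volume : Measure ℝ), 0 < w t)
    (hloc : LocallyIntegrableOn (fun t => w t ^ (1 / (1 - p))) (Ici (0 : ℝ)))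
    (g : ℝ → ℝ) (hg_meas : Measurable g)
    (hg_loc : LocallyIntegrableOn (fun t => w t * |g t| ^ (p - 2) * g t)
      (Ioi (0 : ℝ))) :
    (∀ φ : ℝ → ℝ, ContDiff ℝ (⊤ : ℕ∞) φ → HasCompactSupport φ →
        tsupport φ ⊆ Ioi (0 : ℝ) →
        (∫ t in Ioi (0 : ℝ), w t * |g t| ^ (p - 2) * g t * deriv φ t) = 0)
      ↔ (∃ a : ℝ, ∀ᵐ t ∂(volume.restrict (Ioi (0 : ℝ))),
          g t = a * w t ^ (1 / (1 - p))) :=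
  stmt_1_general p hp w hw_pos g hg_loc
end

section
/- Suppose ∫₀^∞ w(t)^{1/(1-p)} dt = ∞. Let v : [0,∞) → ℝ and let g be locally integrable on [0,∞) with v(x₁) − v(x₀) = ∫_{x₀}^{x₁} g(t) dt for all 0 ≤ x₀ ≤ x₁, and assume the finite-energy condition ∫₀^∞ |g(t)|^p w(t) dt < ∞. Then lim_{x → ∞} |v(x)| / u(x)^{1−1/p} = 0, where u(x) = ∫₀ˣ w(t)^{1/(1-p)} dt. -/
open MeasureTheory Set Filter Topology
open scoped ENNReal

/-!
By Hölder's inequality with the splitting `|g| = (|g| w^{1/p}) · w^{-1/p}`, for `0 ≤ a ≤ x`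
`|v x - v a| ≤ E(a)^{1/p} u(x)^{1-1/p}`, where `E(a) = ∫_a^∞ |g|^p w` is the energy tail.
Dividing by `u(x)^{1-1/p}`, which tends to infinity, gives
`limsup |v x| / u(x)^{1-1/p} ≤ E(a)^{1/p}` for every `a`, and `E(a) → 0` because the energy is
finite.
-/

section Tails

variable {μ : Measure ℝ} {f : ℝ → ℝ≥0∞}

theorem tendsto_setLIntegral_Ioc_atTop (b : ℝ) :
    Tendsto (fun x => ∫⁻ t in Ioc b x, f t ∂μ) atTop (𝓝 (∫⁻ t in Ioi b, f t ∂μ)) := by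
  simp_rw [← withDensity_apply f measurableSet_Ioc, ← withDensity_apply f measurableSet_Ioi,
    ← iUnion_Ioc_right b]
  exact tendsto_measure_iUnion_atTop (antitone_const.Ioc monotone_id)

theorem tendsto_setLIntegral_Ioi_atTop_zero {b : ℝ} (hf : ∫⁻ t in Ioi b, f t ∂μ ≠ ∞) :
    Tendsto (fun a => ∫⁻ t in Ioi a, f t ∂μ) atTop (𝓝 0) := by
  set ν := (μ.restrict (Ioi b)).withDensity f
  have hν : ∀ a, b ≤ a → ν (Ioi a) = ∫⁻ t in Ioi a, f t ∂μ := fun a hba => by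
    rw [withDensity_apply f measurableSet_Ioi, Measure.restrict_restrict measurableSet_Ioi,
      Ioi_inter_Ioi, sup_of_le_left hba]
  have hempty : ⋂ a : ℝ, Ioi a = ∅ :=
    iInter_eq_empty_iff.2 fun t => ⟨t, lt_irrefl t⟩
  have := tendsto_measure_iInter_atTop (μ := ν) (fun a => measurableSet_Ioi.nullMeasurableSet)
    antitone_Ioi ⟨b, by rwa [hν b le_rfl]⟩
  rw [hempty, measure_empty] at this
  exact this.congr' ((eventually_ge_atTop b).mono fun a hba => hν a hba)

end Tails

theorem ofReal_setIntegral_Ioc_eq_lintegral {μ : Measure ℝ} {k : ℝ → ℝ} {b : ℝ}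
    (hk : LocallyIntegrableOn k (Ici b) μ) (hk_nonneg : ∀ᵐ t ∂μ, 0 ≤ k t) (x : ℝ) :
    ENNReal.ofReal (∫ t in Ioc b x, k t ∂μ) = ∫⁻ t in Ioc b x, ENNReal.ofReal (k t) ∂μ :=
  ofReal_integral_eq_lintegral_ofReal
    ((hk.integrableOn_compact_subset Icc_subset_Ici_self isCompact_Icc).mono_set
      Ioc_subset_Icc_self) (ae_restrict_of_ae hk_nonneg)

theorem tendsto_setIntegral_Ioc_atTop_atTop {μ : Measure ℝ} {k : ℝ → ℝ} {b : ℝ}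
    (hk : LocallyIntegrableOn k (Ici b) μ) (hk_nonneg : ∀ᵐ t ∂μ, 0 ≤ k t)
    (hk_inf : ∫⁻ t in Ioi b, ENNReal.ofReal (k t) ∂μ = ∞) :
    Tendsto (fun x => ∫ t in Ioc b x, k t ∂μ) atTop atTop := by
  refine ENNReal.tendsto_ofReal_nhds_top.1 ?_
  simp_rw [ofReal_setIntegral_Ioc_eq_lintegral hk hk_nonneg, ← hk_inf]
  exact tendsto_setLIntegral_Ioc_atTop b

theorem lintegral_ofReal_abs_le_weighted_holder {α : Type*} [MeasurableSpace α] {μ : Measure α}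
    {p : ℝ} (hp : 1 < p) {g w : α → ℝ} (hg : AEMeasurable g μ) (hw : AEMeasurable w μ)
    (hw_pos : ∀ᵐ t ∂μ, 0 < w t) :
    ∫⁻ t, ENNReal.ofReal |g t| ∂μ ≤ (∫⁻ t, ENNReal.ofReal (|g t| ^ p * w t) ∂μ) ^ (1 / p) *
      (∫⁻ t, ENNReal.ofReal (w t ^ (1 / (1 - p))) ∂μ) ^ (1 - 1 / p) := by
  set q := p.conjExponent
  have hpq : p.HolderConjugate q := .conjExponent hp
  have hq : 1 - 1 / p = 1 / q := by rw [one_div, one_div, ← hpq.inv_add_inv_eq_one]; ring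
  have hexp : -(1 / p) * q = 1 / (1 - p) := by
    have : p - 1 ≠ 0 := by linarith
    have : 1 - p ≠ 0 := by linarith
    simp only [q, Real.conjExponent]
    field_simp
    ring
  set F : α → ℝ≥0∞ := fun t => ENNReal.ofReal (|g t| * w t ^ (1 / p))
  set G : α → ℝ≥0∞ := fun t => ENNReal.ofReal (w t ^ (-(1 / p)))
  have hFG : ∀ᵐ t ∂μ, ENNReal.ofReal |g t| = (F * G) t := by
    filter_upwards [hw_pos] with t ht
    rw [Pi.mul_apply, ← ENNReal.ofReal_mul (by positivity), mul_assoc, ← Real.rpow_add ht,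
      add_neg_cancel, Real.rpow_zero, mul_one]
  have hF : ∀ᵐ t ∂μ, F t ^ p = ENNReal.ofReal (|g t| ^ p * w t) := by
    filter_upwards [hw_pos] with t ht
    rw [ENNReal.ofReal_rpow_of_nonneg (by positivity) hpq.nonneg,
      Real.mul_rpow (abs_nonneg _) (by positivity), ← Real.rpow_mul ht.le,
      one_div_mul_cancel hpq.ne_zero, Real.rpow_one]
  have hG : ∀ᵐ t ∂μ, G t ^ q = ENNReal.ofReal (w t ^ (1 / (1 - p))) := by
    filter_upwards [hw_pos] with t ht
    rw [ENNReal.ofReal_rpow_of_nonneg (by positivity) hpq.symm.nonneg, ← Real.rpow_mul ht.le,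
      hexp]
  rw [lintegral_congr_ae hFG, ← lintegral_congr_ae hF, ← lintegral_congr_ae hG, hq]
  exact ENNReal.lintegral_mul_le_Lp_mul_Lq μ hpq (by fun_prop) (by fun_prop)

theorem abs_integral_le_weighted_holder {α : Type*} [MeasurableSpace α] {μ : Measure α}
    {p : ℝ} (hp : 1 < p) {g w : α → ℝ} (hg : AEMeasurable g μ) (hw : AEMeasurable w μ)
    (hw_pos : ∀ᵐ t ∂μ, 0 < w t) {A B : ℝ} (hA : 0 ≤ A) (hB : 0 ≤ B)
    (henergy : ∫⁻ t, ENNReal.ofReal (|g t| ^ p * w t) ∂μ ≤ ENNReal.ofReal A)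
    (hweight : ∫⁻ t, ENNReal.ofReal (w t ^ (1 / (1 - p))) ∂μ ≤ ENNReal.ofReal B) :
    |∫ t, g t ∂μ| ≤ A ^ (1 / p) * B ^ (1 - 1 / p) := by
  have hp0 : 0 < p := by linarith
  have hq : 0 ≤ 1 - 1 / p := sub_nonneg.2 ((div_le_one hp0).2 hp.le)
  rw [← ENNReal.ofReal_le_ofReal_iff (by positivity), ENNReal.ofReal_mul (by positivity),
    ← ENNReal.ofReal_rpow_of_nonneg hA (by positivity), ← ENNReal.ofReal_rpow_of_nonneg hB hq]
  calc ENNReal.ofReal |∫ t, g t ∂μ|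
      ≤ ∫⁻ t, ENNReal.ofReal |g t| ∂μ := by
        simpa only [Real.enorm_eq_ofReal_abs] using enorm_integral_le_lintegral_enorm g
    _ ≤ _ := lintegral_ofReal_abs_le_weighted_holder hp hg hw hw_pos
    _ ≤ _ := by gcongr

theorem tendsto_abs_div_zero_of_le_add_mul {ι : Type*} [SemilatticeSup ι] [Nonempty ι]
    {f C U : ι → ℝ} (hU : Tendsto U atTop atTop) (hC : Tendsto C atTop (𝓝 0))
    (hbound : ∀ᶠ a in atTop, ∀ x, a ≤ x → |f x| ≤ |f a| + C a * U x) :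
    Tendsto (fun x => |f x| / U x) atTop (𝓝 0) := by
  have hU_pos : ∀ᶠ x in atTop, 0 < U x := hU.eventually_gt_atTop 0
  refine tendsto_order.2 ⟨fun b hb => hU_pos.mono fun x hx => hb.trans_le (by positivity),
    fun ε hε => ?_⟩
  obtain ⟨a, ha, hCa⟩ := (hbound.and (hC.eventually_lt_const (half_pos hε))).exists
  have hfa := (hU.const_div_atTop |f a|).eventually_lt_const (half_pos hε)
  filter_upwards [hfa, hU_pos, eventually_ge_atTop a] with x hfax hUx hax
  calc |f x| / U x ≤ (|f a| + C a * U x) / U x := by gcongr; exact ha x hax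
    _ = |f a| / U x + C a := by field_simp
    _ < ε / 2 + ε / 2 := add_lt_add hfax hCa
    _ = ε := add_halves ε

theorem stmt_4_general (p : ℝ) (hp : 1 < p) (w : ℝ → ℝ)
    (hw_meas : Measurable w)
    (hw_pos : ∀ᵐ t ∂(volume : Measure ℝ), 0 < w t)
    (hloc : LocallyIntegrableOn (fun t => w t ^ (1 / (1 - p))) (Ici (0 : ℝ)))
    (hw_inf : (∫⁻ t in Ioi (0 : ℝ), ENNReal.ofReal (w t ^ (1 / (1 - p)))) = ⊤)
    (u : ℝ → ℝ)
    (hu : ∀ x : ℝ, u x = ∫ t in Ioc (0 : ℝ) x, w t ^ (1 / (1 - p)))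
    (v g : ℝ → ℝ) (hg_meas : Measurable g)
    (hftc : ∀ x₀ x₁ : ℝ, 0 ≤ x₀ → x₀ ≤ x₁ →
      v x₁ - v x₀ = ∫ t in Ioc x₀ x₁, g t)
    (henergy : (∫⁻ t in Ioi (0 : ℝ), ENNReal.ofReal (|g t| ^ p * w t)) < ⊤) :
    Tendsto (fun x => |v x| / (u x) ^ (1 - 1 / p)) atTop (nhds 0) := by
  simp only [hu]
  set E : ℝ → ℝ≥0∞ := fun a => ∫⁻ t in Ioi a, ENNReal.ofReal (|g t| ^ p * w t)
  have hk_nonneg : ∀ᵐ t, 0 ≤ w t ^ (1 / (1 - p)) :=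
    hw_pos.mono fun t ht => (Real.rpow_pos_of_pos ht _).le
  have hbound : ∀ a, 0 ≤ a → ∀ x, a ≤ x → |v x| ≤ |v a| + (E a).toReal ^ (1 / p) *
      (∫ t in Ioc 0 x, w t ^ (1 / (1 - p))) ^ (1 - 1 / p) := by
    intro a ha x hax
    have hincrement : |v x - v a| ≤ (E a).toReal ^ (1 / p) *
        (∫ t in Ioc 0 x, w t ^ (1 / (1 - p))) ^ (1 - 1 / p) := by
      rw [hftc a x ha hax]
      refine abs_integral_le_weighted_holder hp hg_meas.aemeasurable hw_meas.aemeasurable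
        (ae_restrict_of_ae hw_pos) ENNReal.toReal_nonneg
        (integral_nonneg_of_ae (ae_restrict_of_ae hk_nonneg)) ?_ ?_
      · rw [ENNReal.ofReal_toReal (ne_top_of_le_ne_top henergy.ne
          (lintegral_mono_set (Ioi_subset_Ioi ha)))]
        exact lintegral_mono_set Ioc_subset_Ioi_self
      · rw [ofReal_setIntegral_Ioc_eq_lintegral hloc hk_nonneg]
        exact lintegral_mono_set (Ioc_subset_Ioc_left ha)
    linarith [abs_sub_abs_le_abs_sub (v x) (v a)]
  have hq : 0 < 1 - 1 / p := sub_pos.2 ((div_lt_one (by linarith)).2 hp)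
  refine tendsto_abs_div_zero_of_le_add_mul ((tendsto_rpow_atTop hq).comp
    (tendsto_setIntegral_Ioc_atTop_atTop hloc hk_nonneg hw_inf)) ?_
    ((eventually_ge_atTop 0).mono hbound)
  have hC := ((ENNReal.tendsto_toReal ENNReal.zero_ne_top).comp
    (tendsto_setLIntegral_Ioi_atTop_zero henergy.ne)).rpow_const (p := 1 / p)
    (Or.inr (by positivity))
  rwa [ENNReal.toReal_zero, Real.zero_rpow (by positivity)] at hC

/-- If `∫₀^∞ w^{1/(1-p)} dt = ∞`, then every locally
absolutely continuous function `v` on `[0,∞)` (with derivative `g`) of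
finite `p`-energy satisfies `lim_{x→∞} |v(x)| / u(x)^{1-1/p} = 0`, where
`u(x) = ∫₀ˣ w(t)^{1/(1-p)} dt`. -/
theorem stmt_4 (p : ℝ) (hp : 1 < p) (w : ℝ → ℝ)
    (hw_meas : Measurable w)
    (hw_pos : ∀ᵐ t ∂(volume : Measure ℝ), 0 < w t)
    (hloc : LocallyIntegrableOn (fun t => w t ^ (1 / (1 - p))) (Ici (0 : ℝ)))
    (hw_inf : (∫⁻ t in Ioi (0 : ℝ), ENNReal.ofReal (w t ^ (1 / (1 - p)))) = ⊤)
    (u : ℝ → ℝ)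
    (hu : ∀ x : ℝ, u x = ∫ t in Ioc (0 : ℝ) x, w t ^ (1 / (1 - p)))
    (hu_pos : ∀ x : ℝ, 0 < x → 0 < u x)
    (hu_mono : ∀ x₀ x₁ : ℝ, 0 ≤ x₀ → x₀ ≤ x₁ → u x₀ ≤ u x₁)
    (v g : ℝ → ℝ) (hg_meas : Measurable g)
    (hg_loc : LocallyIntegrableOn g (Ici (0 : ℝ)))
    (hftc : ∀ x₀ x₁ : ℝ, 0 ≤ x₀ → x₀ ≤ x₁ →
      v x₁ - v x₀ = ∫ t in Ioc x₀ x₁, g t)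
    (henergy : (∫⁻ t in Ioi (0 : ℝ), ENNReal.ofReal (|g t| ^ p * w t)) < ⊤) :
    Tendsto (fun x => |v x| / (u x) ^ (1 - 1 / p)) atTop (nhds 0) :=
  stmt_4_general p hp w hw_meas hw_pos hloc hw_inf u hu v g hg_meas hftc henergy
end

section
/- The following are equivalent: (i) there exist a ≠ 0 and b ∈ ℝ such that the p-harmonic function x ↦ b + a·U(x) is bounded on ℝ; (ii) there exists a ≠ 0 such that x ↦ a·U(x) has finite p-energy on ℝ, i.e. ∫_{−∞}^{∞} |a·w(t)^{1/(1-p)}|^p w(t) dt < ∞; (iii) ∫_{−∞}^{∞} w(t)^{1/(1-p)} dt < ∞. (This is the concrete form, via the explicit description of p-harmonic functions on the weighted line, of the equivalence of the bounded and finite-energy Liouville theorems for p-harmonic functions on (ℝ, w dx).) -/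
/-!
Write `f = w ^ (1 / (1 - p))`, which is a.e. positive. Then `U` is a primitive of a nonnegative
function, so `U` is bounded iff `∫_{-r}^{r} f = U r - U (-r)` stays bounded, i.e. iff `f` is
integrable; a nonconstant affine image of `U` is bounded iff `U` is. The energy integrand is
`|a| ^ p * f`, because the exponent satisfies `p / (1 - p) + 1 = 1 / (1 - p)`.
-/

open MeasureTheory Set Filter

section Primitive

variable {f : ℝ → ℝ}

theorem abs_intervalIntegral_le_integral_norm (hf : Integrable f) (a b : ℝ) :
    |∫ t in a..b, f t| ≤ ∫ t, ‖f t‖ :=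
  calc |∫ t in a..b, f t| = ‖∫ t in a..b, f t‖ := (Real.norm_eq_abs _).symm
    _ ≤ ∫ t in uIoc a b, ‖f t‖ := intervalIntegral.norm_integral_le_integral_norm_uIoc
    _ ≤ ∫ t, ‖f t‖ := setIntegral_le_integral hf.norm (ae_of_all _ fun _ => norm_nonneg _)

theorem integrable_of_abs_primitive_le (hloc : LocallyIntegrable f) (hf : 0 ≤ᵐ[volume] f)
    {C : ℝ} (hC : ∀ x, |∫ t in (0 : ℝ)..x, f t| ≤ C) : Integrable f := by
  refine integrable_of_intervalIntegral_norm_bounded (2 * C)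
    (fun r => (hloc.integrableOn_isCompact isCompact_Icc).mono_set Ioc_subset_Icc_self)
    tendsto_neg_atTop_atBot tendsto_id (Eventually.of_forall fun r => ?_)
  show ∫ t in -r..r, ‖f t‖ ≤ 2 * C
  have hint : ∀ x, IntervalIntegrable f volume 0 x := fun x =>
    (hloc.integrableOn_isCompact isCompact_uIcc).intervalIntegrable
  have hnorm : ∫ t in -r..r, ‖f t‖ = ∫ t in -r..r, f t :=
    intervalIntegral.integral_congr_ae <| by
      filter_upwards [hf] with t ht _ using Real.norm_of_nonneg ht
  rw [hnorm, ← intervalIntegral.integral_interval_sub_left (hint r) (hint (-r))]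
  linarith [abs_le.mp (hC r), abs_le.mp (hC (-r))]

theorem exists_abs_primitive_le_iff_integrable (hloc : LocallyIntegrable f)
    (hf : 0 ≤ᵐ[volume] f) :
    (∃ C, ∀ x, |∫ t in (0 : ℝ)..x, f t| ≤ C) ↔ Integrable f :=
  ⟨fun ⟨_, hC⟩ => integrable_of_abs_primitive_le hloc hf hC,
    fun hfi => ⟨_, abs_intervalIntegral_le_integral_norm hfi 0⟩⟩

end Primitive

theorem exists_nonconstant_affine_bounded_iff {α : Type*} (g : α → ℝ) :
    (∃ a b : ℝ, a ≠ 0 ∧ ∃ M : ℝ, ∀ x, |b + a * g x| ≤ M) ↔ ∃ C, ∀ x, |g x| ≤ C := by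
  constructor
  · rintro ⟨a, b, ha, M, hM⟩
    refine ⟨(M + |b|) / |a|, fun x => ?_⟩
    rw [le_div_iff₀ (abs_pos.mpr ha), mul_comm, ← abs_mul]
    calc |a * g x| = |(b + a * g x) - b| := by ring_nf
      _ ≤ |b + a * g x| + |b| := abs_sub _ _
      _ ≤ M + |b| := by linarith [hM x]
  · rintro ⟨C, hC⟩
    exact ⟨1, 0, one_ne_zero, C, fun x => by simpa using hC x⟩

theorem Real.rpow_one_div_one_sub_rpow_mul_self {p w : ℝ} (hp : p ≠ 1) (hw : 0 < w) :
    (w ^ (1 / (1 - p))) ^ p * w = w ^ (1 / (1 - p)) := by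
  have hexp : 1 / (1 - p) * p + 1 = 1 / (1 - p) := by
    field_simp [sub_ne_zero.mpr hp.symm]
    ring
  rw [← Real.rpow_mul hw.le, ← Real.rpow_add_one hw.ne', hexp]

theorem lintegral_ofReal_abs_mul_rpow_rpow_mul {p : ℝ} (hp : p ≠ 1) {w : ℝ → ℝ}
    (hw : ∀ᵐ t ∂(volume : Measure ℝ), 0 < w t) (a : ℝ) :
    ∫⁻ t, ENNReal.ofReal (|a * w t ^ (1 / (1 - p))| ^ p * w t)
      = ENNReal.ofReal (|a| ^ p) * ∫⁻ t, ENNReal.ofReal (w t ^ (1 / (1 - p))) := by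
  rw [← lintegral_const_mul' _ _ ENNReal.ofReal_ne_top]
  refine lintegral_congr_ae ?_
  filter_upwards [hw] with t ht
  have hpos : 0 < w t ^ (1 / (1 - p)) := Real.rpow_pos_of_pos ht _
  rw [← ENNReal.ofReal_mul (by positivity), abs_mul, abs_of_pos hpos,
    Real.mul_rpow (abs_nonneg a) hpos.le, mul_assoc,
    Real.rpow_one_div_one_sub_rpow_mul_self hp ht]

theorem stmt_7_general (p : ℝ) (hp : 1 < p) (w : ℝ → ℝ)
    (hw_pos : ∀ᵐ t ∂(volume : Measure ℝ), 0 < w t)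
    (hloc : LocallyIntegrable (fun t => w t ^ (1 / (1 - p))))
    (U : ℝ → ℝ)
    (hU : ∀ x : ℝ, U x = ∫ t in (0 : ℝ)..x, w t ^ (1 / (1 - p))) :
    ((∃ a b : ℝ, a ≠ 0 ∧ ∃ M : ℝ, ∀ x : ℝ, |b + a * U x| ≤ M)
        ↔ (∫⁻ t : ℝ, ENNReal.ofReal (w t ^ (1 / (1 - p)))) < ⊤)
      ∧ ((∃ a : ℝ, a ≠ 0 ∧
            (∫⁻ t : ℝ, ENNReal.ofReal (|a * w t ^ (1 / (1 - p))| ^ p * w t)) < ⊤)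
        ↔ (∫⁻ t : ℝ, ENNReal.ofReal (w t ^ (1 / (1 - p)))) < ⊤) := by
  have hf_nonneg : 0 ≤ᵐ[volume] fun t => w t ^ (1 / (1 - p)) :=
    hw_pos.mono fun t ht => Real.rpow_nonneg ht.le _
  refine ⟨?_, ?_⟩
  · rw [exists_nonconstant_affine_bounded_iff, funext hU,
      exists_abs_primitive_le_iff_integrable hloc hf_nonneg, lt_top_iff_ne_top,
      lintegral_ofReal_ne_top_iff_integrable hloc.aestronglyMeasurable hf_nonneg]
  · simp_rw [lintegral_ofReal_abs_mul_rpow_rpow_mul hp.ne' hw_pos]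
    constructor
    · rintro ⟨a, ha, hfin⟩
      have hc : ENNReal.ofReal (|a| ^ p) ≠ 0 :=
        ENNReal.ofReal_pos.mpr (Real.rpow_pos_of_pos (abs_pos.mpr ha) _) |>.ne'
      exact ENNReal.lt_top_of_mul_ne_top_right hfin.ne hc
    · intro h
      exact ⟨1, one_ne_zero, ENNReal.mul_lt_top ENNReal.ofReal_lt_top h⟩

/-- Equivalence of the bounded and finite-energy Liouville
theorems for `p`-harmonic functions on the weighted real line `(ℝ, w dx)`:
(i) some nonconstant `p`-harmonic function `x ↦ b + a·U(x)` (with `a ≠ 0`)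
is bounded on `ℝ`; (ii) some `x ↦ a·U(x)` with `a ≠ 0` has finite
`p`-energy `∫_ℝ |a·w^{1/(1-p)}|^p w dt < ∞`; (iii) `∫_ℝ w^{1/(1-p)} dt < ∞`. -/
theorem stmt_7 (p : ℝ) (hp : 1 < p) (w : ℝ → ℝ)
    (hw_meas : Measurable w)
    (hw_pos : ∀ᵐ t ∂(volume : Measure ℝ), 0 < w t)
    (hloc : LocallyIntegrable (fun t => w t ^ (1 / (1 - p))))
    (U : ℝ → ℝ)
    (hU : ∀ x : ℝ, U x = ∫ t in (0 : ℝ)..x, w t ^ (1 / (1 - p))) :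
    ((∃ a b : ℝ, a ≠ 0 ∧ ∃ M : ℝ, ∀ x : ℝ, |b + a * U x| ≤ M)
        ↔ (∫⁻ t : ℝ, ENNReal.ofReal (w t ^ (1 / (1 - p)))) < ⊤)
      ∧ ((∃ a : ℝ, a ≠ 0 ∧
            (∫⁻ t : ℝ, ENNReal.ofReal (|a * w t ^ (1 / (1 - p))| ^ p * w t)) < ⊤)
        ↔ (∫⁻ t : ℝ, ENNReal.ofReal (w t ^ (1 / (1 - p)))) < ⊤) :=
  stmt_7_general p hp w hw_pos hloc U hU
end

section
/- There exist a ≠ 0 and b ∈ ℝ such that the p-harmonic function x ↦ b + a·U(x) is positive on all of ℝ if and only if min{ ∫_{−∞}^0 w(t)^{1/(1-p)} dt , ∫_0^{∞} w(t)^{1/(1-p)} dt } < ∞. (This is the concrete form, via the explicit description of p-harmonic functions on the weighted line, of the characterization of when the positive Liouville theorem fails on (ℝ, w dx).) -/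
open MeasureTheory Set

/-- Failure of the positive Liouville theorem on the
weighted real line: there is a positive nonconstant `p`-harmonic function
`x ↦ b + a·U(x)` (with `a ≠ 0`) on `(ℝ, w dx)` if and only if
`min{∫_{-∞}^0 w^{1/(1-p)} dt, ∫_0^∞ w^{1/(1-p)} dt} < ∞`. -/
theorem stmt_8 (p : ℝ) (hp : 1 < p) (w : ℝ → ℝ)
    (hw_meas : Measurable w)
    (hw_pos : ∀ᵐ t ∂(volume : Measure ℝ), 0 < w t)
    (hloc : LocallyIntegrable (fun t => w t ^ (1 / (1 - p))))
    (U : ℝ → ℝ)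
    (hU : ∀ x : ℝ, U x = ∫ t in (0 : ℝ)..x, w t ^ (1 / (1 - p))) :
    (∃ a b : ℝ, a ≠ 0 ∧ ∀ x : ℝ, 0 < b + a * U x)
      ↔ min (∫⁻ t in Iio (0 : ℝ), ENNReal.ofReal (w t ^ (1 / (1 - p))))
            (∫⁻ t in Ioi (0 : ℝ), ENNReal.ofReal (w t ^ (1 / (1 - p)))) < ⊤ := by
  set f : ℝ → ℝ := fun t => w t ^ (1 / (1 - p)) with hfdef
  have hf_nn : ∀ᵐ t ∂(volume : Measure ℝ), 0 ≤ f t :=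
    hw_pos.mono fun t ht => (Real.rpow_pos_of_pos ht _).le
  set g : ℝ → ENNReal := fun t => ENNReal.ofReal (f t) with hgdef
  set ν : Measure ℝ := volume.withDensity g with hνdef
  have hνs : ∀ s : Set ℝ, MeasurableSet s → ν s = ∫⁻ t in s, g t := fun s hs =>
    withDensity_apply g hs
  have hν0 : ν {(0 : ℝ)} = 0 :=
    (withDensity_absolutelyContinuous volume g) (Real.volume_singleton)
  have hint : ∀ x y : ℝ, IntegrableOn f (Ioc x y) :=
    fun x y => (hloc.integrableOn_isCompact isCompact_Icc).mono_set Ioc_subset_Icc_self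
  have hInn : ∀ x y : ℝ, x ≤ y → 0 ≤ ∫ t in x..y, f t := by
    intro x y hxy
    rw [intervalIntegral.integral_of_le hxy]
    exact integral_nonneg_of_ae (ae_restrict_of_ae hf_nn)
  have key : ∀ x y : ℝ, x ≤ y → ENNReal.ofReal (∫ t in x..y, f t) = ν (Ioc x y) := by
    intro x y hxy
    rw [intervalIntegral.integral_of_le hxy, hνs _ measurableSet_Ioc,
      ofReal_integral_eq_lintegral_ofReal (hint x y) (ae_restrict_of_ae hf_nn)]
  have hIocIio : ∀ x : ℝ, ν (Ioc x 0) ≤ ν (Iio 0) := by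
    intro x
    calc ν (Ioc x 0) ≤ ν (Iio 0 ∪ {0}) := measure_mono (by
          intro t ht
          rcases lt_or_eq_of_le ht.2 with h | h
          · exact Or.inl h
          · exact Or.inr (by simp [h]))
      _ ≤ ν (Iio 0) + ν {0} := measure_union_le _ _
      _ = ν (Iio 0) := by rw [hν0, add_zero]
  have hUnion1 : (⋃ n : ℕ, Ioc (-(n : ℝ)) 0) = Iic 0 := by
    ext x
    simp only [mem_iUnion, mem_Ioc, mem_Iic]
    constructor
    · rintro ⟨n, _, h2⟩; exact h2
    · intro hx
      obtain ⟨n, hn⟩ := exists_nat_gt (-x)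
      exact ⟨n, by linarith, hx⟩
  have hUnion2 : (⋃ n : ℕ, Ioc (0 : ℝ) n) = Ioi 0 := by
    ext x
    simp only [mem_iUnion, mem_Ioc, mem_Ioi]
    constructor
    · rintro ⟨n, h1, _⟩; exact h1
    · intro hx
      obtain ⟨n, hn⟩ := exists_nat_gt x
      exact ⟨n, hx, hn.le⟩
  have hdir1 : Directed (· ⊆ ·) (fun n : ℕ => Ioc (-(n : ℝ)) 0) := by
    apply Monotone.directed_le
    intro m n hmn
    exact Ioc_subset_Ioc_left (by exact_mod_cast neg_le_neg (Nat.cast_le.2 hmn))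
  have hdir2 : Directed (· ⊆ ·) (fun n : ℕ => Ioc (0 : ℝ) n) := by
    apply Monotone.directed_le
    intro m n hmn
    exact Ioc_subset_Ioc_right (by exact_mod_cast hmn)
  have hIio_sup : ν (Iio (0 : ℝ)) = ⨆ n : ℕ, ν (Ioc (-(n : ℝ)) 0) := by
    have h1 : ν (Iio (0 : ℝ)) = ν (Iic 0) := by
      apply le_antisymm (measure_mono Iio_subset_Iic_self)
      calc ν (Iic (0 : ℝ)) = ν (Iio 0 ∪ {0}) := by rw [Iio_union_right]
        _ ≤ ν (Iio 0) + ν {0} := measure_union_le _ _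
        _ = ν (Iio 0) := by rw [hν0, add_zero]
    rw [h1, ← hUnion1, hdir1.measure_iUnion]
  have hIoi_sup : ν (Ioi (0 : ℝ)) = ⨆ n : ℕ, ν (Ioc (0 : ℝ) n) := by
    rw [← hUnion2, hdir2.measure_iUnion]
  rw [← hνs _ measurableSet_Iio, ← hνs _ measurableSet_Ioi]
  constructor
  · rintro ⟨a, b, ha, hpos⟩
    rcases ha.lt_or_gt with hneg | hposa
    · -- a < 0 : right integral finite
      refine lt_of_le_of_lt (min_le_right _ _) ?_
      rw [hIoi_sup]
      refine lt_of_le_of_lt (iSup_le fun n => ?_) (ENNReal.ofReal_lt_top (r := b / (-a)))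
      rw [← key 0 n (Nat.cast_nonneg n)]
      apply ENNReal.ofReal_le_ofReal
      have h := hpos n
      rw [hU] at h
      rw [le_div_iff₀ (neg_pos.2 hneg)]
      nlinarith [h]
    · -- a > 0 : left integral finite
      refine lt_of_le_of_lt (min_le_left _ _) ?_
      rw [hIio_sup]
      refine lt_of_le_of_lt (iSup_le fun n => ?_) (ENNReal.ofReal_lt_top (r := b / a))
      rw [← key (-(n : ℝ)) 0 (neg_nonpos.2 (Nat.cast_nonneg n))]
      apply ENNReal.ofReal_le_ofReal
      have h := hpos (-(n : ℝ))
      rw [hU] at h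
      have hsymm : (∫ t in (0 : ℝ)..(-(n : ℝ)), f t) = -∫ t in (-(n : ℝ))..(0 : ℝ), f t :=
        intervalIntegral.integral_symm _ _
      rw [hsymm] at h
      rw [le_div_iff₀ hposa]
      nlinarith [h]
  · intro hmin
    rcases min_lt_iff.mp hmin with hL | hR
    · refine ⟨1, (ν (Iio (0 : ℝ))).toReal + 1, one_ne_zero, ?_⟩
      intro x
      rw [hU, one_mul]
      rcases le_or_gt 0 x with hx | hx
      · have h1 := hInn 0 x hx
        have h2 : 0 ≤ (ν (Iio (0 : ℝ))).toReal := ENNReal.toReal_nonneg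
        linarith
      · have hsymm : (∫ t in (0 : ℝ)..x, f t) = -∫ t in x..(0 : ℝ), f t :=
          intervalIntegral.integral_symm _ _
        have h1 : (∫ t in x..(0 : ℝ), f t) ≤ (ν (Iio (0 : ℝ))).toReal := by
          have h2 : ENNReal.ofReal (∫ t in x..(0 : ℝ), f t) ≤ ν (Iio 0) :=
            (key x 0 hx.le) ▸ hIocIio x
          have h3 := ENNReal.toReal_mono hL.ne h2
          rwa [ENNReal.toReal_ofReal (hInn x 0 hx.le)] at h3
        rw [hsymm]
        linarith
    · refine ⟨-1, (ν (Ioi (0 : ℝ))).toReal + 1, by norm_num, ?_⟩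
      intro x
      rw [hU, neg_one_mul]
      rcases le_or_gt x 0 with hx | hx
      · have hsymm : (∫ t in (0 : ℝ)..x, f t) = -∫ t in x..(0 : ℝ), f t :=
          intervalIntegral.integral_symm _ _
        have h1 := hInn x 0 hx
        have h2 : 0 ≤ (ν (Ioi (0 : ℝ))).toReal := ENNReal.toReal_nonneg
        rw [hsymm]
        linarith
      · have h1 : (∫ t in (0 : ℝ)..x, f t) ≤ (ν (Ioi (0 : ℝ))).toReal := by
          have h2 : ENNReal.ofReal (∫ t in (0 : ℝ)..x, f t) ≤ ν (Ioi 0) :=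
            (key 0 x hx.le) ▸ measure_mono Ioc_subset_Ioi_self
          have h3 := ENNReal.toReal_mono hR.ne h2
          rwa [ENNReal.toReal_ofReal (hInn 0 x hx.le)] at h3
        linarith
end

section
/- Let δ > 0 and Λ > 1. There is a constant N₀, depending only on δ, Λ and the doubling constant C_D, with the following property: for every x₀ ∈ X, every r > 0, and every finite chain of points x = x₁, x₂, …, x_m = y contained in the annulus B(x₀,Λr) \ B(x₀,r/Λ) with d(x_k, x_{k+1}) < δr for k = 1,…,m−1, there exist N ≤ N₀ and points y₁, …, y_N ∈ B(x₀,Λr) \ B(x₀,r/Λ) such that x ∈ B(y₁, 2δr), y ∈ B(y_N, 2δr), and the consecutive balls B(y_k, 2δr) and B(y_{k+1}, 2δr) intersect (equivalently d(y_k, y_{k+1}) < 4δr) for k = 1,…,N−1. Moreover, if τ ≤ 1/(4δΛ), then the dilated balls B(y_k, 2τδr) are contained in B(x₀, 2Λr) \ B(x₀, r/(2Λ)). -/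
open MeasureTheory Set Metric

/-!
Shortcut the given chain to a subchain in which only consecutive points are `4δr`-close. Its
points of even index are then pairwise `4δr`-separated and lie in `B(x₀, Λr)`; the balls of
radius `2δr` around them are disjoint, and by doubling each has measure at least `C_D ^ (-J)`
times that of `B(x₀, Λr + 2δr)`, where `2 ^ J δ ≥ Λ + δ`. Hence the subchain has at most
`2 C_D ^ J` points.
-/

theorem exists_shortcut_subchain {α : Type*} (r : α → α → Prop) (z : ℕ → α) (n : ℕ)
    (hz : ∀ j < n, r (z j) (z (j + 1))) :
    ∃ (I : ℕ) (k : ℕ → ℕ), k 0 = 0 ∧ k I = n ∧ (∀ i < I, k i < n) ∧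
      (∀ i < I, r (z (k i)) (z (k (i + 1)))) ∧
      ∀ i j, i + 1 < j → j ≤ I → ¬ r (z (k i)) (z (k j)) := by
  induction n using Nat.strong_induction_on with
  | _ n ih =>
  rcases Nat.eq_zero_or_pos n with rfl | hn
  · exact ⟨0, fun _ => 0, rfl, rfl, by simp, by simp, by omega⟩
  classical
  have hlast : r (z (n - 1)) (z n) := by simpa [Nat.sub_add_cancel hn] using hz (n - 1) (by omega)
  have hex : ∃ j, r (z j) (z n) := ⟨n - 1, hlast⟩
  have hj₀ : Nat.find hex < n := (Nat.find_le hlast).trans_lt (by omega)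
  obtain ⟨I, k, hk0, hkI, hk_lt, hk_rel, hk_sep⟩ := ih _ hj₀ fun j hj => hz j (hj.trans hj₀)
  -- append `z n` to a shortcut chain ending at the first point related to `z n`; minimality of
  -- `Nat.find hex` makes `z n` unrelated to all earlier points of that chain
  refine ⟨I + 1, fun i => if i ≤ I then k i else n, by simp [hk0], by simp, ?_, ?_, ?_⟩
  · intro i hi
    have : k i ≤ Nat.find hex := by
      rcases (Nat.lt_succ_iff.mp hi).lt_or_eq with h | rfl
      · exact (hk_lt i h).le
      · exact hkI.le
    simp only [show i ≤ I by omega, if_true]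
    omega
  · intro i hi
    rcases (Nat.lt_succ_iff.mp hi).lt_or_eq with h | rfl
    · simpa [h.le, Nat.succ_le_of_lt h] using hk_rel i h
    · simpa [hkI] using Nat.find_spec hex
  · intro i j hij hj
    rcases (Nat.le_succ_iff.mp hj) with h | rfl
    · simpa [h, show i ≤ I by omega] using hk_sep i j hij h
    · simpa [show i ≤ I by omega] using Nat.find_min hex (hk_lt i (by omega))

section Doubling

variable {X : Type*} [MetricSpace X] [MeasurableSpace X] {μ : Measure X} {C : ENNReal}

theorem measure_ball_two_pow_mul_le
    (hdbl : ∀ (x : X) (s : ℝ), 0 < s → μ (ball x (2 * s)) ≤ C * μ (ball x s))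
    (J : ℕ) (x : X) {s : ℝ} (hs : 0 < s) :
    μ (ball x (2 ^ J * s)) ≤ C ^ J * μ (ball x s) := by
  induction J with
  | zero => simp
  | succ J ih =>
    calc μ (ball x (2 ^ (J + 1) * s)) = μ (ball x (2 * (2 ^ J * s))) := by ring_nf
      _ ≤ C * μ (ball x (2 ^ J * s)) := hdbl x _ (by positivity)
      _ ≤ C * (C ^ J * μ (ball x s)) := by gcongr
      _ = C ^ (J + 1) * μ (ball x s) := by ring

theorem card_le_pow_of_pairwise_separated [BorelSpace X]
    (hμ : ∀ (x : X) (s : ℝ), 0 < s → 0 < μ (ball x s) ∧ μ (ball x s) < ⊤)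
    (hdbl : ∀ (x : X) (s : ℝ), 0 < s → μ (ball x (2 * s)) ≤ C * μ (ball x s))
    {ι : Type*} [Fintype ι] {p : ι → X} {x₀ : X} {s R : ℝ} {J : ℕ} (hs : 0 < s)
    (hJ : 2 * R + s ≤ 2 ^ J * s) (hp : ∀ i, p i ∈ ball x₀ R)
    (hsep : Pairwise fun i j => 2 * s ≤ dist (p i) (p j)) :
    (Fintype.card ι : ENNReal) ≤ C ^ J := by
  cases isEmpty_or_nonempty ι with
  | inl _ => simp
  | inr hι =>
  obtain ⟨i₀⟩ := hι
  have hR : 0 < R + s := by linarith [dist_nonneg.trans_lt (mem_ball.mp (hp i₀))]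
  set M := μ (ball x₀ (R + s))
  have hM_le : ∀ i, M ≤ C ^ J * μ (ball (p i) s) := fun i =>
    calc M ≤ μ (ball (p i) (2 ^ J * s)) := by
          refine measure_mono fun w hw => ?_
          have := mem_ball'.mp (hp i)
          rw [mem_ball] at hw ⊢
          linarith [dist_triangle w x₀ (p i)]
      _ ≤ C ^ J * μ (ball (p i) s) := measure_ball_two_pow_mul_le hdbl J (p i) hs
  have hunion : ∑ i, μ (ball (p i) s) ≤ M := by
    rw [← tsum_fintype (L := .unconditional ι),
      ← measure_iUnion (fun i j hij => ball_disjoint_ball (by linarith [hsep hij]))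
        fun _ => measurableSet_ball]
    refine measure_mono (iUnion_subset fun i w hw => ?_)
    have := mem_ball.mp (hp i)
    rw [mem_ball] at hw ⊢
    linarith [dist_triangle w (p i) x₀]
  have : (Fintype.card ι : ENNReal) * M ≤ C ^ J * M :=
    calc (Fintype.card ι : ENNReal) * M = ∑ _i : ι, M := by simp
      _ ≤ ∑ i, C ^ J * μ (ball (p i) s) := Finset.sum_le_sum fun i _ => hM_le i
      _ = C ^ J * ∑ i, μ (ball (p i) s) := (Finset.mul_sum ..).symm
      _ ≤ C ^ J * M := by gcongr
  exact (ENNReal.mul_le_mul_iff_left (hμ x₀ _ hR).1.ne' (hμ x₀ _ hR).2.ne).mp this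

end Doubling

theorem ball_subset_annulus_of_mem_annulus {X : Type*} [MetricSpace X] {x₀ y : X} {Λ r ρ : ℝ}
    (hΛ : 1 ≤ Λ) (hy : y ∈ ball x₀ (Λ * r) \ ball x₀ (r / Λ)) (hρ : ρ ≤ r / (2 * Λ)) :
    ball y ρ ⊆ ball x₀ (2 * Λ * r) \ ball x₀ (r / (2 * Λ)) := by
  intro w hw
  obtain ⟨hy_out, hy_in⟩ := hy
  rw [mem_ball] at hw hy_out
  rw [mem_ball, not_lt] at hy_in
  have hr : 0 < r := by nlinarith [dist_nonneg (x := y) (y := x₀)]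
  have hΛ' : 0 < Λ := by linarith
  have h_half : r / Λ - r / (2 * Λ) = r / (2 * Λ) := by field_simp; ring
  have h_small : r / (2 * Λ) ≤ Λ * r := by
    rw [div_le_iff₀ (by positivity)]; nlinarith [mul_le_mul_of_nonneg_left hΛ hΛ'.le]
  refine ⟨?_, ?_⟩
  · rw [mem_ball]; linarith [dist_triangle w y x₀]
  · rw [mem_ball, not_lt]; linarith [dist_triangle y w x₀, dist_comm w y]

theorem stmt_10_general {X : Type*} [MetricSpace X] [MeasurableSpace X] [BorelSpace X] (μ : Measure X)
    (C_D : ℝ)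
    (hμpos : ∀ (x : X) (r : ℝ), 0 < r → 0 < μ (ball x r) ∧ μ (ball x r) < ⊤)
    (hdbl : ∀ (x : X) (r : ℝ), 0 < r →
      μ (ball x (2 * r)) ≤ ENNReal.ofReal C_D * μ (ball x r))
    (δ Λ : ℝ) (hδ : 0 < δ) (hΛ : 1 < Λ) :
    ∃ N₀ : ℕ, ∀ (x₀ : X) (r : ℝ), 0 < r →
      ∀ (m : ℕ) (z : ℕ → X), 1 ≤ m →
      (∀ k < m, z k ∈ ball x₀ (Λ * r) \ ball x₀ (r / Λ)) →
      (∀ k, k + 1 < m → dist (z k) (z (k + 1)) < δ * r) →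
      ∃ (N : ℕ) (y : ℕ → X), 1 ≤ N ∧ N ≤ N₀ ∧
        (∀ k < N, y k ∈ ball x₀ (Λ * r) \ ball x₀ (r / Λ)) ∧
        z 0 ∈ ball (y 0) (2 * δ * r) ∧
        z (m - 1) ∈ ball (y (N - 1)) (2 * δ * r) ∧
        (∀ k, k + 1 < N → dist (y k) (y (k + 1)) < 4 * δ * r) ∧
        (∀ τ : ℝ, 0 < τ → τ ≤ 1 / (4 * δ * Λ) → ∀ k < N,
          ball (y k) (2 * τ * δ * r)
            ⊆ ball x₀ (2 * Λ * r) \ ball x₀ (r / (2 * Λ))) := by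
  obtain ⟨J, hJ⟩ : ∃ J : ℕ, (Λ + δ) / δ < 2 ^ J := pow_unbounded_of_one_lt _ one_lt_two
  set B := ENNReal.ofReal C_D ^ J
  refine ⟨2 * ⌈B.toReal⌉₊, fun x₀ r hr m z hm hz hchain => ?_⟩
  obtain ⟨I, k, hk0, hkI, hk_lt, hk_rel, hk_sep⟩ :=
    exists_shortcut_subchain (fun a b => dist a b < 4 * δ * r) z (m - 1)
      fun j hj => (hchain j (by omega)).trans (by nlinarith)
  have hk_le : ∀ i ≤ I, k i ≤ m - 1 := fun i hi =>
    hi.lt_or_eq.elim (fun h => (hk_lt i h).le) fun h => h ▸ hkI.le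
  have hk_mem : ∀ i ≤ I, z (k i) ∈ ball x₀ (Λ * r) \ ball x₀ (r / Λ) := fun i hi =>
    hz _ (by have := hk_le i hi; omega)
  -- the points of even index are `4δr`-separated, so there are at most `B` of them
  have hcard : I / 2 + 1 ≤ ⌈B.toReal⌉₊ := by
    have hsep : ∀ t t' : Fin (I / 2 + 1), t < t' →
        2 * (2 * δ * r) ≤ dist (z (k (2 * t))) (z (k (2 * t'))) := fun t t' htt' => by
      linarith [not_lt.mp (hk_sep (2 * t) (2 * t') (by omega) (by omega))]
    have hJr : 2 * (Λ * r) + 2 * δ * r ≤ 2 ^ J * (2 * δ * r) := by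
      rw [div_lt_iff₀ hδ] at hJ; nlinarith
    have := card_le_pow_of_pairwise_separated hμpos hdbl
      (p := fun t : Fin (I / 2 + 1) => z (k (2 * t))) (by positivity) hJr
      (fun t => (hk_mem _ (by omega)).1) fun t t' htt' => by
        rcases htt'.lt_or_gt with h | h
        · exact hsep t t' h
        · rw [dist_comm]; exact hsep t' t h
    rw [Fintype.card_fin] at this
    exact_mod_cast (ENNReal.toReal_mono (by simp) this).trans (Nat.le_ceil _)
  refine ⟨I + 1, fun i => z (k i), by omega, by omega, fun i hi => hk_mem i (by omega), ?_, ?_,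
    fun i hi => hk_rel i (by omega),
    fun τ hτ hτΛ i hi => ball_subset_annulus_of_mem_annulus hΛ.le (hk_mem i (by omega)) ?_⟩
  · simp [hk0, hδ, hr]
  · simp [hkI, hδ, hr]
  · have : τ * (4 * δ * Λ) ≤ 1 := (le_div_iff₀ (by positivity)).mp hτΛ
    calc 2 * τ * δ * r = τ * (4 * δ * Λ) * (r / (2 * Λ)) := by field_simp; ring
      _ ≤ r / (2 * Λ) := mul_le_of_le_one_left (by positivity) this

/-- Chains of points in an annulus of a metric space with a
globally doubling measure can be replaced by chains of boundedly many balls: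
there is `N₀ = N₀(δ, Λ, C_D)` such that any chain `z 0, …, z (m-1)` in
`B(x₀, Λr) \ B(x₀, r/Λ)` with consecutive distances `< δr` can be replaced by
a chain of at most `N₀` balls of radii `2δr` centred in the same annulus,
with the first ball containing `z 0`, the last containing `z (m-1)`, and
consecutive balls intersecting; moreover the `τ`-dilated balls stay inside
`B(x₀, 2Λr) \ B(x₀, r/(2Λ))` whenever `0 < τ ≤ 1/(4δΛ)`. -/
theorem stmt_10 {X : Type*} [MetricSpace X] [MeasurableSpace X] [BorelSpace X] (μ : Measure X)
    (C_D : ℝ) (hC : 1 ≤ C_D)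
    (hμpos : ∀ (x : X) (r : ℝ), 0 < r → 0 < μ (ball x r) ∧ μ (ball x r) < ⊤)
    (hdbl : ∀ (x : X) (r : ℝ), 0 < r →
      μ (ball x (2 * r)) ≤ ENNReal.ofReal C_D * μ (ball x r))
    (δ Λ : ℝ) (hδ : 0 < δ) (hΛ : 1 < Λ) :
    ∃ N₀ : ℕ, ∀ (x₀ : X) (r : ℝ), 0 < r →
      ∀ (m : ℕ) (z : ℕ → X), 1 ≤ m →
      (∀ k < m, z k ∈ ball x₀ (Λ * r) \ ball x₀ (r / Λ)) →
      (∀ k, k + 1 < m → dist (z k) (z (k + 1)) < δ * r) →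
      ∃ (N : ℕ) (y : ℕ → X), 1 ≤ N ∧ N ≤ N₀ ∧
        (∀ k < N, y k ∈ ball x₀ (Λ * r) \ ball x₀ (r / Λ)) ∧
        z 0 ∈ ball (y 0) (2 * δ * r) ∧
        z (m - 1) ∈ ball (y (N - 1)) (2 * δ * r) ∧
        (∀ k, k + 1 < N → dist (y k) (y (k + 1)) < 4 * δ * r) ∧
        (∀ τ : ℝ, 0 < τ → τ ≤ 1 / (4 * δ * Λ) → ∀ k < N,
          ball (y k) (2 * τ * δ * r)
            ⊆ ball x₀ (2 * Λ * r) \ ball x₀ (r / (2 * Λ))) :=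
  stmt_10_general μ C_D hμpos hdbl δ Λ hδ hΛ
end

section
/- Let v : [0,∞) × [0,1] → ℝ be continuous, and suppose there is a measurable g on (0,∞) × (0,1) with ∫_{(0,∞)×(0,1)} |g(t,y)|^p dt dy < ∞ such that for every y ∈ [0,1] and all 0 ≤ x₀ ≤ x₁, v(x₁,y) − v(x₀,y) = ∫_{x₀}^{x₁} g(t,y) dt. Let t(x) = min_{0 ≤ y ≤ 1} v(x,y). Then limsup_{x → ∞} t(x)/x^{1−1/p} ≤ 0. (This is the key growth estimate in the paper's proof that every quasiharmonic function with finite p-energy on the unweighted strip ℝ × [0,1] is constant.) -/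
/-!
Choose `x₀` so far out that the `p`-energy of `g` beyond `x₀` is small. For `x ≥ x₀` and every
`y`, `t x ≤ v x y = v x₀ y + ∫_{x₀}^{x} g(s, y) ds`, so averaging over `y ∈ (0,1)` bounds
`t x - M` by `∫∫_{(x₀,x]×(0,1)} |g|`, where `M` bounds `v x₀` on `[0,1]`. Hölder on this box of
area `x - x₀` bounds that by `(tail energy)^(1/p) · x^(1-1/p)`, and `M` is absorbed as `x → ∞`.
-/

open MeasureTheory Set Filter
open scoped Topology ENNReal

theorem lintegral_le_lintegral_rpow_mul_measure_univ_rpow {α : Type*} [MeasurableSpace α]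
    {μ : Measure α} {f : α → ℝ≥0∞} (hf : AEMeasurable f μ) {p : ℝ} (hp : 1 ≤ p) :
    ∫⁻ a, f a ∂μ ≤ (∫⁻ a, f a ^ p ∂μ) ^ (1 / p) * μ univ ^ (1 - 1 / p) := by
  have hp0 : 0 < p := zero_lt_one.trans_le hp
  have h := ENNReal.lintegral_mul_norm_pow_le (hf.pow_const p)
    (aemeasurable_const (b := (1 : ℝ≥0∞))) (one_div_nonneg.2 hp0.le)
    (sub_nonneg.2 ((div_le_one hp0).2 hp)) (add_sub_cancel _ _)
  simpa only [ENNReal.one_rpow, mul_one, ← ENNReal.rpow_mul, mul_one_div_cancel hp0.ne',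
    ENNReal.rpow_one, lintegral_const, one_mul] using h

theorem tendsto_setLIntegral_Ioi_prod_atTop_zero {β : Type*} [MeasurableSpace β]
    {μ : Measure (ℝ × β)} {f : ℝ × β → ℝ≥0∞} {s : Set β} (hs : MeasurableSet s) {a₀ : ℝ}
    (h : ∫⁻ z in Ioi a₀ ×ˢ s, f z ∂μ ≠ ∞) :
    Tendsto (fun a => ∫⁻ z in Ioi a ×ˢ s, f z ∂μ) atTop (𝓝 0) := by
  have hmeas : ∀ a : ℝ, MeasurableSet (Ioi a ×ˢ s) := fun a => measurableSet_Ioi.prod hs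
  simp_rw [← withDensity_apply _ (hmeas _)]
  have hanti : Antitone fun a : ℝ => Ioi a ×ˢ s := fun a b hab =>
    prod_mono (Ioi_subset_Ioi hab) le_rfl
  have hempty : ⋂ a : ℝ, Ioi a ×ˢ s = ∅ :=
    eq_empty_of_forall_notMem fun z hz => lt_irrefl z.1 (mem_iInter.1 hz z.1).1
  simpa [Function.comp_def, hempty] using tendsto_measure_iInter_atTop
    (fun a => (hmeas a).nullMeasurableSet) hanti ⟨a₀, by rwa [withDensity_apply _ (hmeas a₀)]⟩

theorem mul_measure_le_setLIntegral_prod {α β : Type*} [MeasurableSpace α] [MeasurableSpace β]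
    {μ : Measure α} {ν : Measure β} [SFinite μ] [SFinite ν] {f : α × β → ℝ≥0∞}
    (hf : Measurable f) {s : Set α} {t : Set β} {c : ℝ≥0∞}
    (h : ∀ y ∈ t, c ≤ ∫⁻ x in s, f (x, y) ∂μ) :
    c * ν t ≤ ∫⁻ z in s ×ˢ t, f z ∂μ.prod ν := by
  rw [← Measure.prod_restrict, lintegral_prod_symm _ hf.aemeasurable, ← setLIntegral_const]
  exact setLIntegral_mono hf.lintegral_prod_left' h

theorem ofReal_sub_le_setLIntegral_Ioc_prod_enorm {v : ℝ → ℝ → ℝ} {g : ℝ × ℝ → ℝ}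
    (hg : Measurable g) {x₀ x m M : ℝ}
    (hftc : ∀ y ∈ Ioo (0 : ℝ) 1, v x y - v x₀ y = ∫ s in Ioc x₀ x, g (s, y))
    (hm : ∀ y ∈ Ioo (0 : ℝ) 1, m ≤ v x y) (hM : ∀ y ∈ Ioo (0 : ℝ) 1, v x₀ y ≤ M) :
    ENNReal.ofReal (m - M) ≤ ∫⁻ z in Ioc x₀ x ×ˢ Ioo 0 1, ‖g z‖ₑ := by
  have h := mul_measure_le_setLIntegral_prod (μ := volume) (ν := volume) hg.enorm
    (s := Ioc x₀ x) (c := ENNReal.ofReal (m - M)) fun y hy => calc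
      ENNReal.ofReal (m - M) ≤ ENNReal.ofReal (∫ s in Ioc x₀ x, g (s, y)) :=
        ENNReal.ofReal_le_ofReal (by linarith [hftc y hy, hm y hy, hM y hy])
      _ ≤ ‖∫ s in Ioc x₀ x, g (s, y)‖ₑ := Real.ofReal_le_enorm _
      _ ≤ ∫⁻ s in Ioc x₀ x, ‖g (s, y)‖ₑ := enorm_integral_le_lintegral_enorm _
  rwa [Real.volume_Ioo, sub_zero, ENNReal.ofReal_one, mul_one, ← Measure.volume_eq_prod] at h

theorem setLIntegral_Ioc_prod_enorm_le {g : ℝ × ℝ → ℝ} (hg : Measurable g) {p : ℝ} (hp : 1 ≤ p)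
    {x₀ x : ℝ} (hx₀ : 0 ≤ x₀) (hx : x₀ ≤ x) :
    ∫⁻ z in Ioc x₀ x ×ˢ Ioo 0 1, ‖g z‖ₑ ≤
      (∫⁻ z in Ioi x₀ ×ˢ Ioo 0 1, ENNReal.ofReal (|g z| ^ p)) ^ (1 / p) *
        ENNReal.ofReal (x ^ (1 - 1 / p)) := by
  have hp0 : 0 < p := zero_lt_one.trans_le hp
  have hα : 0 ≤ 1 - 1 / p := sub_nonneg.2 ((div_le_one hp0).2 hp)
  have hbox : volume (Ioc x₀ x ×ˢ Ioo (0 : ℝ) 1) = ENNReal.ofReal (x - x₀) := by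
    rw [Measure.volume_eq_prod, Measure.prod_prod, Real.volume_Ioc, Real.volume_Ioo]
    simp
  refine (lintegral_le_lintegral_rpow_mul_measure_univ_rpow hg.enorm.aemeasurable hp).trans ?_
  rw [Measure.restrict_apply_univ, hbox]
  gcongr ?_ ^ _ * ?_
  · simp_rw [Real.enorm_eq_ofReal_abs, ENNReal.ofReal_rpow_of_nonneg (abs_nonneg _) hp0.le]
    exact lintegral_mono_set (prod_mono Ioc_subset_Ioi_self le_rfl)
  · rw [ENNReal.ofReal_rpow_of_nonneg (sub_nonneg.2 hx) hα]
    gcongr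
    linarith

/-- Growth estimate on the strip: if `v` is continuous on
`[0,∞) × [0,1]`, each horizontal slice satisfies the fundamental theorem of
calculus with derivative `g`, and `g` has finite `p`-energy
`∫∫_{(0,∞)×(0,1)} |g|^p dt dy < ∞`, then the slice-minimum
`t(x) = min_{0 ≤ y ≤ 1} v(x,y)` satisfies
`limsup_{x→∞} t(x)/x^{1-1/p} ≤ 0` (stated in its `ε`-form). -/
theorem stmt_11 (p : ℝ) (hp : 1 < p)
    (v g : ℝ → ℝ → ℝ)
    (hv_cont : ContinuousOn (fun q : ℝ × ℝ => v q.1 q.2)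
      (Ici (0 : ℝ) ×ˢ Icc (0 : ℝ) 1))
    (hg_meas : Measurable (fun q : ℝ × ℝ => g q.1 q.2))
    (henergy : (∫⁻ q : ℝ × ℝ in Ioi (0 : ℝ) ×ˢ Ioo (0 : ℝ) 1,
      ENNReal.ofReal (|g q.1 q.2| ^ p)) < ⊤)
    (hftc : ∀ y ∈ Icc (0 : ℝ) 1, ∀ x₀ x₁ : ℝ, 0 ≤ x₀ → x₀ ≤ x₁ →
      v x₁ y - v x₀ y = ∫ s in Ioc x₀ x₁, g s y)
    (t : ℝ → ℝ)
    (ht : ∀ x : ℝ, 0 ≤ x → IsLeast ((fun y => v x y) '' Icc (0 : ℝ) 1) (t x)) :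
    ∀ ε : ℝ, 0 < ε → ∀ᶠ x in atTop, t x ≤ ε * x ^ (1 - 1 / p) := by
  intro ε hε
  have hα : 0 < 1 - 1 / p := sub_pos.2 ((div_lt_one (zero_lt_one.trans hp)).2 hp)
  have htail : Tendsto (fun a => (∫⁻ z in Ioi a ×ˢ Ioo (0 : ℝ) 1,
      ENNReal.ofReal (|g z.1 z.2| ^ p)) ^ (1 / p)) atTop (𝓝 0) := by
    have h0 : (0 : ℝ≥0∞) ^ (1 / p) = 0 := ENNReal.zero_rpow_of_pos (by positivity)
    simpa only [h0, Function.comp_def] using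
      ((ENNReal.continuous_rpow_const (y := 1 / p)).tendsto 0).comp
        (tendsto_setLIntegral_Ioi_prod_atTop_zero measurableSet_Ioo henergy.ne)
  obtain ⟨x₀, hsmall, hx₀⟩ := ((htail.eventually (ge_mem_nhds
    (ENNReal.ofReal_pos.2 (half_pos hε)))).and (eventually_ge_atTop 0)).exists
  obtain ⟨M, hM⟩ := (isCompact_Icc.image_of_continuousOn (hv_cont.comp
    (Continuous.prodMk_right x₀).continuousOn fun y hy => ⟨hx₀, hy⟩)).bddAbove
  filter_upwards [eventually_ge_atTop x₀, ((tendsto_rpow_atTop hα).const_mul_atTop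
    (half_pos hε)).eventually_ge_atTop M] with x hx hMx
  have hbound : ENNReal.ofReal (t x - M) ≤ ENNReal.ofReal (ε / 2 * x ^ (1 - 1 / p)) := calc
    _ ≤ ∫⁻ z in Ioc x₀ x ×ˢ Ioo 0 1, ‖g z.1 z.2‖ₑ :=
      ofReal_sub_le_setLIntegral_Ioc_prod_enorm hg_meas
        (fun y hy => hftc y (Ioo_subset_Icc_self hy) x₀ x hx₀ hx)
        (fun y hy => (ht x (hx₀.trans hx)).2 (mem_image_of_mem _ (Ioo_subset_Icc_self hy)))
        (fun y hy => hM (mem_image_of_mem _ (Ioo_subset_Icc_self hy)))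
    _ ≤ _ := setLIntegral_Ioc_prod_enorm_le hg_meas hp.le hx₀ hx
    _ ≤ _ := by
      rw [ENNReal.ofReal_mul (half_pos hε).le]
      gcongr
  have hle := (ENNReal.ofReal_le_ofReal_iff
    (mul_nonneg (half_pos hε).le (Real.rpow_nonneg (hx₀.trans hx) _))).1 hbound
  linarith [hle]
end
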